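/- If N_0 is chosen sufficiently large, then every y ∈ E_{M,θ}(α) satisfies ℓ_{n_j}(y) ≤ 2^{2j+5} for all j ≥ N_0. -/

import Mathlib

open Filter Real

noncomputable section

/-- The generalized Gauss map `T_θ`. -/
def gaussMap (θ : ℝ) (x : ℝ) : ℝ := if x = 0 then 0 else 1 / x - θ * ⌊1 / (θ * x)⌋

/-- The `n`-th digit (1-indexed) of the θ-expansion of `x`: `ℓ_n(x) = ⌊1/(θ·T_θ^{n−1}(x))⌋`. -/
def digit (θ : ℝ) (x : ℝ) (n : ℕ) : ℤ := ⌊1 / (θ * (gaussMap θ)^[n - 1] x)⌋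

/-- `S_{n,θ}(x)`, the sum of the first `n` digits. -/
def Sdig (θ : ℝ) (x : ℝ) (n : ℕ) : ℤ := ∑ k ∈ Finset.Icc 1 n, digit θ x k

/-- `L_{n,θ}(x)`, the maximum of the first `n` digits. -/
def Ldig (θ : ℝ) (x : ℝ) (n : ℕ) : ℤ :=
  if h : 1 ≤ n then (Finset.Icc 1 n).sup' (Finset.nonempty_Icc.mpr h) (digit θ x) else 0

/-- The ratio `L_{n,θ}(x)·log n·log log n / (S_{n,θ}(x) − L_{n,θ}(x))`. -/
def ratioFun (θ : ℝ) (x : ℝ) (n : ℕ) : ℝ :=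
  ((Ldig θ x n : ℝ) * Real.log n * Real.log (Real.log n)) /
    ((Sdig θ x n : ℝ) - (Ldig θ x n : ℝ))

/-- The level set `E_θ(α)` of irrationals in `[0,θ]` where the ratio tends to `α`. -/
def Eset (θ α : ℝ) : Set ℝ :=
  {x | x ∈ Set.Icc 0 θ ∧ Irrational x ∧
    Tendsto (fun n => ratioFun θ x n) atTop (nhds α)}

/-- The sparse sequence `n_k = ⌊exp(k^{3/4})⌋`. -/
def sparseSeq (k : ℕ) : ℕ := ⌊Real.exp ((k : ℝ) ^ ((3 : ℝ) / 4))⌋₊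

/-- The technical conditions (A), (B), (C) on the cutoff `N0`, required to hold
for every `k ≥ N0`. -/
def N0Cond (α : ℝ) (m M : ℕ) (N0 : ℕ) : Prop :=
  ∀ k : ℕ, N0 ≤ k →
    (α * m * ((sparseSeq k : ℝ) - 1) /
        (Real.log (sparseSeq k) * Real.log (Real.log (sparseSeq k))) > (M : ℝ) + 1) ∧
    (Real.log (sparseSeq (k + 1)) * Real.log (Real.log (sparseSeq (k + 1))) -
        Real.log (sparseSeq k) * Real.log (Real.log (sparseSeq k)) < α / 2) ∧
    ((sparseSeq (k + 1) : ℝ) - (sparseSeq k : ℝ) <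
        (sparseSeq k : ℝ) / (k : ℝ) ^ ((1 : ℝ) / 8))

/-- `i` is one of the insertion positions `n_k`, `k ≥ N0`. -/
def insertedPos (N0 : ℕ) (i : ℕ) : Prop := ∃ k : ℕ, N0 ≤ k ∧ i = sparseSeq k

/-- The constructed set `E_{M,θ}(α)`: irrationals in `[0,θ]` whose digit at each
insertion position `n_k` (`k ≥ N0`) equals
`⌊α·(Σ_{i=1}^{n_k−1} ℓ_i(x)) / (log n_k · log log n_k)⌋`, and whose digits at all
other positions lie in `[m, M]`. -/
def EMset (θ α : ℝ) (m M N0 : ℕ) : Set ℝ :=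
  {x | x ∈ Set.Icc 0 θ ∧ Irrational x ∧
    (∀ k : ℕ, N0 ≤ k →
      digit θ x (sparseSeq k) =
        ⌊α * (∑ i ∈ Finset.Icc 1 (sparseSeq k - 1), (digit θ x i : ℝ)) /
          (Real.log (sparseSeq k) * Real.log (Real.log (sparseSeq k)))⌋) ∧
    (∀ i : ℕ, 1 ≤ i → ¬ insertedPos N0 i →
      (m : ℤ) ≤ digit θ x i ∧ digit θ x i ≤ (M : ℤ))}

/-!
By strong induction on `j`: if every inserted digit `ℓ_{n_k}` with `k < j` is at most
`2^(2k+5)`, then, since `n_j ≤ e^j ≤ 4^j`, the digits before position `n_j` sum to at most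
`M n_j + ∑_{k<j} 2^(2k+5) ≤ (M + 16) 4^j`. Hence `ℓ_{n_j} ≤ α (M + 16) 4^j / (log n_j log log n_j)`,
which is at most `2^(2j+5) = 32 · 4^j` once `log n_j log log n_j ≥ α (M + 16) / 32`, and that holds
for all large `j` because `n_j → ∞`.
-/

open Finset

lemma sparseSeq_monotone : Monotone sparseSeq := fun a b h =>
  Nat.floor_mono <| Real.exp_le_exp.mpr <|
    Real.rpow_le_rpow (Nat.cast_nonneg a) (Nat.cast_le.mpr h) (by norm_num)

lemma sparseSeq_le_four_pow (j : ℕ) : sparseSeq j ≤ 4 ^ j := by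
  refine Nat.floor_le_of_le ?_
  have hexponent : (j : ℝ) ^ ((3 : ℝ) / 4) ≤ j := by
    rcases Nat.eq_zero_or_pos j with rfl | hj
    · simp
    · simpa using Real.rpow_le_rpow_of_exponent_le (Nat.one_le_cast.mpr hj)
        (by norm_num : (3 : ℝ) / 4 ≤ 1)
  calc Real.exp ((j : ℝ) ^ ((3 : ℝ) / 4)) ≤ Real.exp j := Real.exp_le_exp.mpr hexponent
    _ = Real.exp 1 ^ j := by rw [← Real.exp_nat_mul, mul_one]
    _ ≤ 4 ^ j := by gcongr; linarith [Real.exp_one_lt_d9]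
    _ = ((4 ^ j : ℕ) : ℝ) := by push_cast; rfl

lemma tendsto_sparseSeq_atTop : Tendsto sparseSeq atTop atTop :=
  tendsto_nat_floor_atTop.comp <| tendsto_exp_atTop.comp <|
    (tendsto_rpow_atTop (by norm_num)).comp tendsto_natCast_atTop_atTop

lemma tendsto_log_mul_log_log_sparseSeq :
    Tendsto (fun k => log (sparseSeq k) * log (log (sparseSeq k))) atTop atTop := by
  have hlog : Tendsto (fun k => log (sparseSeq k)) atTop atTop :=
    tendsto_log_atTop.comp (tendsto_natCast_atTop_atTop.comp tendsto_sparseSeq_atTop)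
  exact hlog.atTop_mul_atTop₀ (tendsto_log_atTop.comp hlog)

lemma sum_range_two_pow_le (j : ℕ) :
    ∑ k ∈ range j, (2 : ℝ) ^ (2 * k + 5) ≤ 2 ^ (2 * j + 4) := by
  induction j with
  | zero => norm_num
  | succ j ih =>
    have hnext : (2 : ℝ) ^ (2 * (j + 1) + 4) = 4 * 2 ^ (2 * j + 4) := by ring
    have hterm : (2 : ℝ) ^ (2 * j + 5) = 2 * 2 ^ (2 * j + 4) := by ring
    rw [sum_range_succ, hnext, hterm]
    linarith [pow_pos (two_pos : (0 : ℝ) < 2) (2 * j + 4)]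

/-- A position `p k` below `p j` has `k < j` by monotonicity, so only the bounds `b k`, `k < j`,
enter. -/
lemma sum_Icc_nonneg_and_le {d : ℕ → ℝ} {p : ℕ → ℕ} (hp : Monotone p) {N0 j : ℕ} {M : ℝ}
    {b : ℕ → ℝ} (hM : 0 ≤ M)
    (hoff : ∀ i ∈ Icc 1 (p j - 1), (¬∃ k, N0 ≤ k ∧ i = p k) → 0 ≤ d i ∧ d i ≤ M)
    (hon : ∀ k ∈ Ico N0 j, 0 ≤ d (p k) ∧ d (p k) ≤ b k) :
    0 ≤ ∑ i ∈ Icc 1 (p j - 1), d i ∧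
      ∑ i ∈ Icc 1 (p j - 1), d i ≤ M * p j + ∑ k ∈ Ico N0 j, b k := by
  classical
  set T := (Ico N0 j).image p
  have hT_nonneg : ∀ i ∈ T, 0 ≤ d i := by
    rintro _ hi
    obtain ⟨k, hk, rfl⟩ := mem_image.mp hi
    exact (hon k hk).1
  have hoff' : ∀ i ∈ Icc 1 (p j - 1), i ∉ T → 0 ≤ d i ∧ d i ≤ M := by
    refine fun i hi hiT => hoff i hi ?_
    rintro ⟨k, hk, rfl⟩
    have hlt : p k < p j := by have := mem_Icc.mp hi; omega
    exact hiT (mem_image_of_mem p (mem_Ico.mpr ⟨hk, hp.reflect_lt hlt⟩))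
  refine ⟨sum_nonneg fun i hi => ?_, ?_⟩
  · by_cases hiT : i ∈ T
    exacts [hT_nonneg i hiT, (hoff' i hi hiT).1]
  rw [← sum_filter_add_sum_filter_not _ (· ∈ T), add_comm]
  gcongr
  · calc ∑ i ∈ Icc 1 (p j - 1) with i ∉ T, d i
        ≤ #{i ∈ Icc 1 (p j - 1) | i ∉ T} • M :=
          sum_le_card_nsmul _ _ _ fun i hi => (hoff' i (mem_filter.mp hi).1 (mem_filter.mp hi).2).2
      _ ≤ M * p j := by
          rw [nsmul_eq_mul, mul_comm]
          gcongr
          exact_mod_cast (card_filter_le _ _).trans (by simp)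
  · calc ∑ i ∈ Icc 1 (p j - 1) with i ∈ T, d i
        ≤ ∑ i ∈ T, d i :=
          sum_le_sum_of_subset_of_nonneg (fun i hi => (mem_filter.mp hi).2)
            fun i hi _ => hT_nonneg i hi
      _ ≤ ∑ k ∈ Ico N0 j, d (p k) := sum_image_le_of_nonneg hT_nonneg
      _ ≤ ∑ k ∈ Ico N0 j, b k := sum_le_sum fun k hk => (hon k hk).2

namespace EMset

variable {θ α : ℝ} {m M N0 : ℕ} {y : ℝ}

lemma digit_sparseSeq_nonneg_and_le (hα : 0 < α) (hy : y ∈ EMset θ α m M N0)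
    (hlarge : ∀ j, N0 ≤ j → α * (M + 16) / 32 ≤ log (sparseSeq j) * log (log (sparseSeq j)))
    (j : ℕ) (hj : N0 ≤ j) :
    0 ≤ digit θ y (sparseSeq j) ∧ (digit θ y (sparseSeq j) : ℝ) ≤ 2 ^ (2 * j + 5) := by
  obtain ⟨-, -, hinserted, hother⟩ := hy
  induction j using Nat.strong_induction_on with
  | _ j ih =>
  set D := log (sparseSeq j) * log (log (sparseSeq j))
  have hD : 0 < D := lt_of_lt_of_le (by positivity) (hlarge j hj)
  obtain ⟨hS_nonneg, hS_le⟩ := sum_Icc_nonneg_and_le (d := fun i => (digit θ y i : ℝ))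
    (b := fun k => 2 ^ (2 * k + 5)) sparseSeq_monotone (N0 := N0) (M := M) (by positivity)
    (fun i hi hi' => by
      obtain ⟨hlo, hhi⟩ := hother i (mem_Icc.mp hi).1 hi'
      exact ⟨by exact_mod_cast (Int.natCast_nonneg m).trans hlo, by exact_mod_cast hhi⟩)
    (fun k hk => by
      obtain ⟨hlo, hhi⟩ := ih k (mem_Ico.mp hk).2 (mem_Ico.mp hk).1
      exact ⟨by exact_mod_cast hlo, hhi⟩)
  set S := ∑ i ∈ Icc 1 (sparseSeq j - 1), (digit θ y i : ℝ)
  have hfour : (2 : ℝ) ^ (2 * j + 5) = 32 * 4 ^ j := by rw [pow_add, pow_mul]; norm_num; ring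
  have hS : S ≤ (M + 16) * 4 ^ j := by
    have hn : (sparseSeq j : ℝ) ≤ 4 ^ j := by exact_mod_cast sparseSeq_le_four_pow j
    have hgeom : ∑ k ∈ Ico N0 j, (2 : ℝ) ^ (2 * k + 5) ≤ 16 * 4 ^ j :=
      calc ∑ k ∈ Ico N0 j, (2 : ℝ) ^ (2 * k + 5)
          ≤ ∑ k ∈ range j, (2 : ℝ) ^ (2 * k + 5) :=
            sum_le_sum_of_subset_of_nonneg (fun k hk => mem_range.mpr (mem_Ico.mp hk).2)
              fun _ _ _ => by positivity
        _ ≤ 2 ^ (2 * j + 4) := sum_range_two_pow_le j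
        _ = 16 * 4 ^ j := by rw [pow_add, pow_mul]; norm_num; ring
    nlinarith [mul_le_mul_of_nonneg_left hn (Nat.cast_nonneg (α := ℝ) M)]
  rw [hinserted j hj]
  refine ⟨Int.floor_nonneg.mpr (by positivity), ?_⟩
  calc (⌊α * S / D⌋ : ℝ) ≤ α * S / D := Int.floor_le _
    _ ≤ 2 ^ (2 * j + 5) := by
      rw [div_le_iff₀ hD, hfour]
      have hαD : α * (M + 16) ≤ 32 * D := by linarith [hlarge j hj]
      calc α * S ≤ α * ((M + 16) * 4 ^ j) := by gcongr
        _ = α * (M + 16) * 4 ^ j := by ring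
        _ ≤ 32 * D * 4 ^ j := by gcongr
        _ = 32 * 4 ^ j * D := by ring

end EMset

theorem inserted_digits_growth_bound_general (θ : ℝ) (m : ℕ)
    (α : ℝ) (hα : 0 < α) (M : ℕ) :
    ∃ N1 : ℕ, ∀ N0 : ℕ, N1 ≤ N0 → N0Cond α m M N0 →
      ∀ y ∈ EMset θ α m M N0, ∀ j : ℕ, N0 ≤ j →
        digit θ y (sparseSeq j) ≤ 2 ^ (2 * j + 5) := by
  obtain ⟨N1, hN1⟩ := eventually_atTop.mp
    (tendsto_log_mul_log_log_sparseSeq.eventually_ge_atTop (α * (M + 16) / 32))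
  refine ⟨N1, fun N0 hN0 _ y hy j hj => ?_⟩
  exact_mod_cast (EMset.digit_sparseSeq_nonneg_and_le hα hy
    (fun k hk => hN1 k (hN0.trans hk)) j hj).2

/-- if `N0` is chosen sufficiently large, then every `y ∈ E_{M,θ}(α)`
satisfies `ℓ_{n_j}(y) ≤ 2^{2j+5}` for all `j ≥ N0`. -/
theorem inserted_digits_growth_bound (θ : ℝ) (m : ℕ) (hm : 0 < m) (hmns : ¬ IsSquare m)
    (hθ : θ ∈ Set.Ioo (0 : ℝ) 1) (hθirr : Irrational θ) (hθ2 : θ ^ 2 = 1 / m)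
    (α : ℝ) (hα : 0 < α) (M : ℕ) (hM : 2 * m + 1 < M) :
    ∃ N1 : ℕ, ∀ N0 : ℕ, N1 ≤ N0 → N0Cond α m M N0 →
      ∀ y ∈ EMset θ α m M N0, ∀ j : ℕ, N0 ≤ j →
        digit θ y (sparseSeq j) ≤ 2 ^ (2 * j + 5) :=
  inserted_digits_growth_bound_general θ m α hα M
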